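/- There exists a separable metric space X of asymptotic dimension 0 such that X admits no coarse embedding into any proper metric space. -/

import Mathlib

/-- `d` is a metric on the set `X`. -/
def IsMetricD {X : Type*} (d : X → X → ℝ) : Prop :=
  (∀ x, d x x = 0) ∧ (∀ x y, d x y = 0 → x = y) ∧ (∀ x y, d x y = d y x) ∧
    (∀ x y z, d x z ≤ d x y + d y z)

/-- the ultrametric (strong triangle) inequality. -/
def IsUltraD {X : Type*} (d : X → X → ℝ) : Prop :=
  ∀ x y z, d x z ≤ max (d x y) (d y z)

/-- There is an `r`-chain joining `a` and `b`. -/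
def ChainD {Y : Type*} (d : Y → Y → ℝ) (r : ℝ) (a b : Y) : Prop :=
  ∃ (k : ℕ) (c : ℕ → Y), c 0 = a ∧ c k = b ∧ ∀ i < k, d (c i) (c (i + 1)) < r

/-- asymptotic dimension 0: chains of uniformly bounded gauge are uniformly bounded. -/
def AsDimZeroD {Y : Type*} (d : Y → Y → ℝ) : Prop :=
  ∀ r > (0 : ℝ), ∃ s > (0 : ℝ), ∀ a b : Y, ChainD d r a b → d a b ≤ s

/-- large scale continuous (uniformly bornologous). -/
def LSCD {X Y : Type*} (dX : X → X → ℝ) (dY : Y → Y → ℝ) (f : X → Y) : Prop :=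
  ∀ R > (0 : ℝ), ∃ s > (0 : ℝ), ∀ x y : X, dX x y ≤ R → dY (f x) (f y) ≤ s

/-- uniformly proper. -/
def UnifProperD {X Y : Type*} (dX : X → X → ℝ) (dY : Y → Y → ℝ) (f : X → Y) : Prop :=
  ∀ R > (0 : ℝ), ∃ s > (0 : ℝ), ∀ x y : X, dY (f x) (f y) ≤ R → dX x y ≤ s

/-- coarsely surjective. -/
def CoarselySurjD {X Y : Type*} (dY : Y → Y → ℝ) (f : X → Y) : Prop :=
  ∃ R > (0 : ℝ), ∀ y : Y, ∃ x : X, dY (f x) y ≤ R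

/-- coarse embedding. -/
def CoarseEmbD {X Y : Type*} (dX : X → X → ℝ) (dY : Y → Y → ℝ) (f : X → Y) : Prop :=
  LSCD dX dY f ∧ UnifProperD dX dY f

/-- coarse equivalence. -/
def CoarseEquivD {X Y : Type*} (dX : X → X → ℝ) (dY : Y → Y → ℝ) (f : X → Y) : Prop :=
  LSCD dX dY f ∧ UnifProperD dX dY f ∧ CoarselySurjD dY f

/-- the induced integral ultrametric `d_f^ul`. -/
noncomputable def dulD {X Y : Type*} (d : Y → Y → ℝ) (f : X → Y) (x y : X) : ℝ :=
  letI := Classical.decEq X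
  if x = y then 0 else
    ((sInf {r : ℕ | 1 ≤ r ∧ ChainD d (r : ℝ) (f x) (f y)} : ℕ) : ℝ)

/-- `d` is a metric on the subset `A`. -/
def IsMetricOnD {X : Type*} (d : X → X → ℝ) (A : Set X) : Prop :=
  (∀ x ∈ A, d x x = 0) ∧ (∀ x ∈ A, ∀ y ∈ A, d x y = 0 → x = y) ∧
    (∀ x ∈ A, ∀ y ∈ A, d x y = d y x) ∧
    (∀ x ∈ A, ∀ y ∈ A, ∀ z ∈ A, d x z ≤ d x y + d y z)

/-- the ultrametric inequality on a subset. -/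
def IsUltraOnD {X : Type*} (d : X → X → ℝ) (A : Set X) : Prop :=
  ∀ x ∈ A, ∀ y ∈ A, ∀ z ∈ A, d x z ≤ max (d x y) (d y z)

/-- every triangle is isosceles. -/
def IsoscelesD {X : Type*} (d : X → X → ℝ) : Prop :=
  ∀ x y z : X, d x y = d y z ∨ d x y = d x z ∨ d y z = d x z

/-- every triangle with vertices in `A` is isosceles. -/
def IsoscelesOnD {X : Type*} (d : X → X → ℝ) (A : Set X) : Prop :=
  ∀ x ∈ A, ∀ y ∈ A, ∀ z ∈ A, d x y = d y z ∨ d x y = d x z ∨ d y z = d x z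

/-- a set is bounded with respect to the distance function `d`. -/
def BoundedD {X : Type*} (d : X → X → ℝ) (A : Set X) : Prop :=
  ∃ C : ℝ, ∀ x ∈ A, ∀ y ∈ A, d x y ≤ C

/-- `d` makes the disjoint union `Σ s, X s` a coarse disjoint union of the family
of metrics `ds`. -/
def IsCoarseDisjointUnion {S : Type*} {X : S → Type*} (ds : ∀ s, X s → X s → ℝ)
    (d : (Σ s, X s) → (Σ s, X s) → ℝ) : Prop :=
  (∀ (s : S) (x y : X s), d ⟨s, x⟩ ⟨s, y⟩ = ds s x y) ∧
    ∀ M > (0 : ℝ), ∃ B : ∀ s, Set (X s),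
      (∀ s, BoundedD (ds s) (B s)) ∧ {s | (B s).Nonempty}.Finite ∧
      ∀ (s t : S) (x : X s) (y : X t), s ≠ t → x ∉ B s → y ∉ B t → d ⟨s, x⟩ ⟨t, y⟩ > M

/-!
Take `ℕ × ℕ` with `d p q = max p.1 q.1 + 1` for `p ≠ q`. This is an ultrametric, so `r`-chains
never leave the `r`-ball and the asymptotic dimension is `0`; the space is countable, hence
separable. But each level `{n} × ℕ` is an infinite bounded set whose points are pairwise at
distance `n + 1`. A coarse embedding would map a level with `n + 1` beyond the uniform
properness bound of scale `1` to a bounded, hence relatively compact, set of a proper space;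
two of its image points would then be within `1` of each other, a contradiction.
-/

lemma properSpace_of_isCompact_closure {Y : Type*} [PseudoMetricSpace Y]
    (hY : ∀ B : Set Y, Bornology.IsBounded B → IsCompact (closure B)) : ProperSpace Y :=
  ⟨fun x r => by simpa using hY _ (Metric.isBounded_closedBall (x := x) (r := r))⟩

lemma exists_ne_dist_lt_of_isBounded_range {Y : Type*} [PseudoMetricSpace Y] [ProperSpace Y]
    {u : ℕ → Y} (hu : Bornology.IsBounded (Set.range u)) {ε : ℝ} (hε : 0 < ε) :
    ∃ i j, i ≠ j ∧ dist (u i) (u j) < ε := by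
  obtain ⟨_, -, φ, hφ, hlim⟩ := tendsto_subseq_of_bounded hu (Set.mem_range_self (f := u))
  obtain ⟨N, hN⟩ := Metric.cauchySeq_iff'.1 hlim.cauchySeq ε hε
  exact ⟨φ (N + 1), φ N, (hφ N.lt_succ_self).ne', hN (N + 1) N.le_succ⟩

lemma asDimZeroD_of_isUltraD {X : Type*} {d : X → X → ℝ} (hd : ∀ x, d x x = 0)
    (hu : IsUltraD d) : AsDimZeroD d := by
  intro r hr
  refine ⟨r, hr, ?_⟩
  rintro a _ ⟨k, c, rfl, rfl, hc⟩
  suffices ∀ n ≤ k, d (c 0) (c n) < r from (this k le_rfl).le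
  intro n hn
  induction n with
  | zero => simpa [hd] using hr
  | succ n ih =>
    exact (hu _ _ _).trans_lt (max_lt (ih (by omega)) (hc n (by omega)))

lemma IsUltraD.isMetricD {X : Type*} {d : X → X → ℝ} (hu : IsUltraD d) (hd : ∀ x, d x x = 0)
    (heq : ∀ x y, d x y = 0 → x = y) (hsymm : ∀ x y, d x y = d y x) : IsMetricD d := by
  have hnonneg : ∀ x y, 0 ≤ d x y := fun x y => by
    have := hu x y x
    rw [hd, hsymm y x, max_self] at this
    linarith
  exact ⟨hd, heq, hsymm, fun x y z =>
    (hu x y z).trans (max_le_add_of_nonneg (hnonneg x y) (hnonneg y z))⟩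

lemma not_coarseEmbD_of_forall_exists_separated {X Y : Type*} [PseudoMetricSpace Y]
    [ProperSpace Y] {dX : X → X → ℝ}
    (hsep : ∀ S, ∃ u : ℕ → X, BoundedD dX (Set.range u) ∧ Pairwise fun i j => S < dX (u i) (u j))
    (f : X → Y) : ¬ CoarseEmbD dX dist f := by
  rintro ⟨hlsc, hup⟩
  obtain ⟨S, -, hS⟩ := hup 1 one_pos
  obtain ⟨u, ⟨C, hC⟩, hu⟩ := hsep S
  obtain ⟨s, -, hs⟩ := hlsc (max C 1) (by positivity)
  have hbdd : Bornology.IsBounded (Set.range (f ∘ u)) := Metric.isBounded_iff.2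
    ⟨s, by
      rintro _ ⟨i, rfl⟩ _ ⟨j, rfl⟩
      exact hs _ _ (le_max_of_le_left (hC _ ⟨i, rfl⟩ _ ⟨j, rfl⟩))⟩
  obtain ⟨i, j, hij, hdist⟩ := exists_ne_dist_lt_of_isBounded_range hbdd one_pos
  exact (hu hij).not_ge (hS _ _ hdist.le)

noncomputable def levelDist (p q : ℕ × ℕ) : ℝ :=
  if p = q then 0 else ((max p.1 q.1 : ℕ) : ℝ) + 1

lemma levelDist_self (p : ℕ × ℕ) : levelDist p p = 0 := if_pos rfl

lemma levelDist_of_ne {p q : ℕ × ℕ} (h : p ≠ q) : levelDist p q = max p.1 q.1 + 1 := if_neg h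

lemma levelDist_nonneg (p q : ℕ × ℕ) : 0 ≤ levelDist p q := by
  unfold levelDist; split_ifs <;> positivity

lemma isUltraD_levelDist : IsUltraD levelDist := by
  intro x y z
  by_cases hxz : x = z
  · subst hxz; rw [levelDist_self]; exact le_max_of_le_left (levelDist_nonneg _ _)
  by_cases hxy : x = y
  · subst hxy; exact le_max_right _ _
  by_cases hyz : y = z
  · subst hyz; exact le_max_left _ _
  rw [levelDist_of_ne hxz, levelDist_of_ne hxy, levelDist_of_ne hyz, max_add_add_right]
  gcongr
  exact_mod_cast (by omega : max x.1 z.1 ≤ max (max x.1 y.1) (max y.1 z.1))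

lemma isMetricD_levelDist : IsMetricD levelDist := by
  refine isUltraD_levelDist.isMetricD levelDist_self (fun x y h => ?_) (fun x y => ?_)
  · by_contra hne
    rw [levelDist_of_ne hne] at h
    exact absurd h (by positivity)
  · unfold levelDist; simp only [eq_comm, max_comm]

lemma levelDist_level (n : ℕ) {i j : ℕ} (h : i ≠ j) : levelDist (n, i) (n, j) = n + 1 := by
  rw [levelDist_of_ne (by simpa using h), max_self]

lemma levelDist_le (p q : ℕ × ℕ) : levelDist p q ≤ max p.1 q.1 + 1 := by
  unfold levelDist; split_ifs
  · positivity
  · exact le_rfl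

lemma exists_separated_levelDist (S : ℝ) :
    ∃ u : ℕ → ℕ × ℕ, BoundedD levelDist (Set.range u) ∧
      Pairwise fun i j => S < levelDist (u i) (u j) := by
  refine ⟨fun i => (⌈S⌉₊, i), ⟨⌈S⌉₊ + 1, ?_⟩, fun i j hij => ?_⟩
  · rintro _ ⟨i, rfl⟩ _ ⟨j, rfl⟩
    simpa using levelDist_le (⌈S⌉₊, i) (⌈S⌉₊, j)
  · show S < levelDist (⌈S⌉₊, i) (⌈S⌉₊, j)
    rw [levelDist_level _ hij]
    linarith [Nat.le_ceil S]

/-- There is a separable metric space of asymptotic dimension 0 which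
admits no coarse embedding into any proper metric space. -/
theorem separable_asdim_zero_not_embeddable_into_proper :
    ∃ (X : Type) (dX : X → X → ℝ), IsMetricD dX ∧
      (∃ D : Set X, D.Countable ∧ ∀ x : X, ∀ ε > (0 : ℝ), ∃ y ∈ D, dX x y < ε) ∧
      AsDimZeroD dX ∧
      ∀ (Y : Type u) [MetricSpace Y],
        (∀ B : Set Y, Bornology.IsBounded B → IsCompact (closure B)) →
        ∀ f : X → Y, ¬ CoarseEmbD dX (dist : Y → Y → ℝ) f := by
  refine ⟨ℕ × ℕ, levelDist, isMetricD_levelDist,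
    ⟨Set.univ, Set.countable_univ, fun x ε hε => ⟨x, trivial, by rwa [levelDist_self]⟩⟩,
    asDimZeroD_of_isUltraD levelDist_self isUltraD_levelDist, fun Y _ hY f => ?_⟩
  have := properSpace_of_isCompact_closure hY
  exact not_coarseEmbD_of_forall_exists_separated exists_separated_levelDist f
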